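/- arXiv:2207.01314 — 3 statements merged into one kernel-verified Lean document; each statement's English description precedes it below -/
import Mathlib

section
/- Let p be a prime and let M be a 2×2 matrix with entries in ℚ_p. Suppose there exist α, β ∈ ℚ_p with ‖α‖ = 1 and ‖β‖ < 1 such that trace(M) = α + β and det(M) = α·β (so in particular α ≠ β and α − β is invertible). Then the sequence n ↦ M^{n!} converges, entrywise in the p-adic topology, to the matrix E := (α − β)^{-1} · (M − β·I), where I is the 2×2 identity matrix. Moreover the limit E is idempotent (E·E = E) and satisfies M·E = E·M = α·E. -/
/-!
By Cayley–Hamilton `(M - α)(M - β) = 0`, so `E = (α - β)⁻¹ (M - β)` and `1 - E` are complementary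
idempotents on which `M` acts by `α` and `β`; hence `M ^ k = α ^ k E + β ^ k (1 - E)`. Since
`‖β‖ < 1`, `β ^ n! → 0`. For the unit `α`, its image in `(ℤ/p^k)ˣ` has finite order, which divides
`n!` once `n` is large, so `α ^ n! ≡ 1 mod p^k` eventually, for every `k`: that is, `α ^ n! → 1`.
-/

open Filter Matrix

open scoped Topology

theorem IsOfFinOrder.pow_factorial_eq_one {G : Type*} [Monoid G] {x : G} (hx : IsOfFinOrder x)
    {n : ℕ} (hn : orderOf x ≤ n) : x ^ n.factorial = 1 :=
  orderOf_dvd_iff_pow_eq_one.1 (Nat.dvd_factorial hx.orderOf_pos hn)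

namespace PadicInt

variable {p : ℕ} [Fact p.Prime]

theorem eventually_norm_pow_factorial_sub_one_le {a : ℤ_[p]} (ha : IsUnit a) (k : ℕ) :
    ∀ᶠ n : ℕ in atTop, ‖a ^ n.factorial - 1‖ ≤ (p : ℝ) ^ (-(k : ℤ)) := by
  let u : (ZMod (p ^ k))ˣ := (ha.map (toZModPow k)).unit
  filter_upwards [eventually_ge_atTop (orderOf u)] with n hn
  have hu : toZModPow k (a ^ n.factorial) = 1 := by
    simpa [u] using congrArg Units.val ((isOfFinOrder_of_finite u).pow_factorial_eq_one hn)
  rw [norm_le_pow_iff_mem_span_pow, ← ker_toZModPow, RingHom.mem_ker, map_sub, hu, map_one,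
    sub_self]

theorem tendsto_pow_factorial_of_isUnit {a : ℤ_[p]} (ha : IsUnit a) :
    Tendsto (fun n : ℕ ↦ a ^ n.factorial) atTop (𝓝 1) := by
  refine Metric.tendsto_nhds.2 fun ε hε ↦ ?_
  obtain ⟨k, hk⟩ := exists_pow_neg_lt p hε
  filter_upwards [eventually_norm_pow_factorial_sub_one_le ha k] with n hn
  exact (dist_eq_norm _ _).trans_lt (hn.trans_lt hk)

end PadicInt

theorem Padic.tendsto_pow_factorial_of_norm_eq_one {p : ℕ} [Fact p.Prime] {α : ℚ_[p]}
    (hα : ‖α‖ = 1) : Tendsto (fun n : ℕ ↦ α ^ n.factorial) atTop (𝓝 1) := by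
  let a : ℤ_[p] := ⟨α, hα.le⟩
  exact ((continuous_subtype_val.tendsto (1 : ℤ_[p])).comp
    (PadicInt.tendsto_pow_factorial_of_isUnit (PadicInt.isUnit_iff.2 hα : IsUnit a))).congr
      fun n ↦ PadicInt.coe_pow a n.factorial

theorem Matrix.sub_smul_one_mul_sub_smul_one_eq_zero {R : Type*} [CommRing R]
    {M : Matrix (Fin 2) (Fin 2) R} {α β : R} (htr : M.trace = α + β) (hdet : M.det = α * β) :
    (M - α • 1) * (M - β • 1) = 0 := by
  nontriviality R
  have hCH := M.aeval_self_charpoly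
  rw [charpoly_fin_two, htr, hdet] at hCH
  simp only [map_add, map_sub, map_mul, map_pow, Polynomial.aeval_X, Polynomial.aeval_C,
    Algebra.algebraMap_eq_smul_one] at hCH
  rw [← hCH]
  simp only [sub_mul, mul_sub, add_mul, one_mul, mul_one, smul_mul_assoc, mul_smul_comm, sq]
  module

section EigenProjection

variable {K A : Type*} [Field K] [Ring A] [Algebra K A] {M : A} {α β : K}

def eigenProjection (M : A) (α β : K) : A := (α - β)⁻¹ • (M - β • 1)

theorem mul_eigenProjection (h : (M - α • 1) * (M - β • 1) = 0) :
    M * eigenProjection M α β = α • eigenProjection M α β := by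
  rw [sub_mul, smul_mul_assoc, one_mul, sub_eq_zero] at h
  rw [eigenProjection, mul_smul_comm, h, smul_comm]

theorem eigenProjection_mul (h : (M - α • 1) * (M - β • 1) = 0) :
    eigenProjection M α β * M = α • eigenProjection M α β := by
  have hcomm : Commute (eigenProjection M α β) M :=
    ((Commute.refl M).sub_left ((Commute.one_left M).smul_left β)).smul_left _
  rw [hcomm.eq, mul_eigenProjection h]

theorem sub_smul_eigenProjection (hαβ : α ≠ β) :
    (α - β) • eigenProjection M α β = M - β • 1 := by
  rw [eigenProjection, smul_smul, mul_inv_cancel₀ (sub_ne_zero.2 hαβ), one_smul]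

theorem eigenProjection_mul_self (h : (M - α • 1) * (M - β • 1) = 0) (hαβ : α ≠ β) :
    eigenProjection M α β * eigenProjection M α β = eigenProjection M α β := by
  nth_rewrite 2 [eigenProjection]
  rw [mul_smul_comm, mul_sub, mul_smul_comm, mul_one, eigenProjection_mul h, ← sub_smul,
    smul_smul, inv_mul_cancel₀ (sub_ne_zero.2 hαβ), one_smul]

theorem mul_one_sub_eigenProjection (h : (M - α • 1) * (M - β • 1) = 0) (hαβ : α ≠ β) :
    M * (1 - eigenProjection M α β) = β • (1 - eigenProjection M α β) := by
  have hM : M = (α - β) • eigenProjection M α β + β • 1 := by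
    rw [sub_smul_eigenProjection hαβ, sub_add_cancel]
  rw [mul_sub, mul_one, mul_eigenProjection h]
  nth_rewrite 1 [hM]
  module

theorem pow_eq_smul_eigenProjection_add (h : (M - α • 1) * (M - β • 1) = 0) (hαβ : α ≠ β)
    (k : ℕ) :
    M ^ k = α ^ k • eigenProjection M α β + β ^ k • (1 - eigenProjection M α β) := by
  induction k with
  | zero => simp
  | succ k ih =>
    rw [pow_succ', ih, mul_add, mul_smul_comm, mul_smul_comm, mul_eigenProjection h,
      mul_one_sub_eigenProjection h hαβ, smul_smul, smul_smul, ← pow_succ, ← pow_succ]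

theorem tendsto_pow_eigenProjection [TopologicalSpace K] [TopologicalSpace A]
    [ContinuousSMul K A] [ContinuousAdd A] (h : (M - α • 1) * (M - β • 1) = 0) (hαβ : α ≠ β)
    {ι : Type*} {l : Filter ι} {f : ι → ℕ} (hα : Tendsto (fun i ↦ α ^ f i) l (𝓝 1))
    (hβ : Tendsto (fun i ↦ β ^ f i) l (𝓝 0)) :
    Tendsto (fun i ↦ M ^ f i) l (𝓝 (eigenProjection M α β)) := by
  have := (hα.smul_const (eigenProjection M α β)).add (hβ.smul_const (1 - eigenProjection M α β))
  rw [one_smul, zero_smul, add_zero] at this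
  exact this.congr fun i ↦ (pow_eq_smul_eigenProjection_add h hαβ (f i)).symm

end EigenProjection

/-- Hida's ordinary projector, linear-algebraic form: if a `2×2` matrix `M` over `ℚ_p`
has trace `α + β` and determinant `α·β` with `‖α‖ = 1` and `‖β‖ < 1`, then `M^{n!}`
converges entrywise to the idempotent `E = (α−β)⁻¹ • (M − β•1)`, which satisfies
`M·E = E·M = α•E`. -/
theorem matrix_pow_factorial_tendsto_ordinary_projector (p : ℕ) [Fact p.Prime]
    (M : Matrix (Fin 2) (Fin 2) ℚ_[p]) (α β : ℚ_[p])
    (hα : ‖α‖ = 1) (hβ : ‖β‖ < 1) (htr : M.trace = α + β) (hdet : M.det = α * β) :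
    Filter.Tendsto (fun n : ℕ => M ^ n.factorial) Filter.atTop
        (nhds ((α - β)⁻¹ • (M - β • (1 : Matrix (Fin 2) (Fin 2) ℚ_[p])))) ∧
      ((α - β)⁻¹ • (M - β • (1 : Matrix (Fin 2) (Fin 2) ℚ_[p]))) *
          ((α - β)⁻¹ • (M - β • 1)) = (α - β)⁻¹ • (M - β • 1) ∧
      M * ((α - β)⁻¹ • (M - β • (1 : Matrix (Fin 2) (Fin 2) ℚ_[p]))) =
          α • ((α - β)⁻¹ • (M - β • 1)) ∧
      ((α - β)⁻¹ • (M - β • (1 : Matrix (Fin 2) (Fin 2) ℚ_[p]))) * M =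
          α • ((α - β)⁻¹ • (M - β • 1)) := by
  have hαβ : α ≠ β := ne_of_apply_ne norm (hβ.trans_eq hα.symm).ne'
  have hCH := sub_smul_one_mul_sub_smul_one_eq_zero htr hdet
  have hαpow := Padic.tendsto_pow_factorial_of_norm_eq_one hα
  have hβpow : Tendsto (fun n : ℕ ↦ β ^ n.factorial) atTop (𝓝 0) :=
    (tendsto_pow_atTop_nhds_zero_of_norm_lt_one hβ).comp factorial_tendsto_atTop
  exact ⟨tendsto_pow_eigenProjection hCH hαβ hαpow hβpow, eigenProjection_mul_self hCH hαβ,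
    mul_eigenProjection hCH, eigenProjection_mul hCH⟩
end

section
/- Let p be a prime and r ≥ 1 an integer, and let d₁, d₂, d₃ be units of ℤ/p^rℤ. Suppose (v₁,v₂,v₃) and (w₁,w₂,w₃) are triples of primitive row vectors in (ℤ/p^rℤ)² satisfying D(v₁,v₂,v₃) = D(w₁,w₂,w₃) = (d₁,d₂,d₃). Then there exists a unique γ ∈ SL₂(ℤ/p^rℤ) such that vᵢ·γ = wᵢ for i = 1, 2, 3. In other words, SL₂(ℤ/p^rℤ), acting diagonally on the right, acts simply transitively on the set Σ_r[d₁,d₂,d₃] of triples of primitive vectors with determinant invariant (d₁,d₂,d₃). -/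
/-- A row vector `v ∈ (ℤ/p^rℤ)²` is primitive if it does not lie in `p·(ℤ/p^rℤ)²`. -/
def IsPrimitiveVec (p r : ℕ) (v : Fin 2 → ZMod (p ^ r)) : Prop :=
  ∀ w : Fin 2 → ZMod (p ^ r), v ≠ (p : ZMod (p ^ r)) • w

/-- The determinant of the `2×2` matrix with rows `v` and `w`. -/
def det2 {R : Type*} [CommRing R] (v w : Fin 2 → R) : R :=
  v 0 * w 1 - v 1 * w 0

/-!
Since `det(v₁;v₂) = d₃` is a unit, the rows `v₁, v₂` form an invertible matrix `M`, so a `γ`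
with `v₁γ = w₁, v₂γ = w₂` must be `M⁻¹N`, where `N` has rows `w₁, w₂`; it lies in `SL₂` because
`det N = det M`. The third vector is then forced, after cancelling the unit `d₃`, by the relation
`det(v₂;v₃) v₁ + det(v₃;v₁) v₂ + det(v₁;v₂) v₃ = 0`, whose coefficients are the same for both
triples.
-/

open Matrix

theorem Matrix.SpecialLinearGroup.existsUnique_mul_eq {n R : Type*} [Fintype n] [DecidableEq n]
    [CommRing R] {M N : Matrix n n R} (hM : IsUnit M.det) (hdet : N.det = M.det) :
    ∃! γ : SpecialLinearGroup n R, M * γ = N := by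
  have hMinv : M * M⁻¹ = 1 := mul_nonsing_inv M hM
  refine ⟨⟨M⁻¹ * N, ?_⟩, by simp [← mul_assoc, hMinv], fun γ hγ => Subtype.ext ?_⟩
  · rw [det_mul, det_nonsing_inv, hdet, Ring.inverse_mul_cancel _ hM]
  · exact ((isUnit_iff_isUnit_det M).mpr hM).mul_left_cancel (by simp [hγ, ← mul_assoc, hMinv])

section Det2

variable {R : Type*} [CommRing R]

theorem det2_eq_det_of (v w : Fin 2 → R) : det2 v w = (of ![v, w]).det := by
  simp [det2, det_fin_two]

theorem of_mul_eq_of_iff_vecMul_eq (v₁ v₂ w₁ w₂ : Fin 2 → R) (A : Matrix (Fin 2) (Fin 2) R) :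
    of ![v₁, v₂] * A = of ![w₁, w₂] ↔ v₁ ᵥ* A = w₁ ∧ v₂ ᵥ* A = w₂ := by
  simp [funext_iff]

theorem det2_smul_add_det2_smul_add_det2_smul_eq_zero (v₁ v₂ v₃ : Fin 2 → R) :
    det2 v₂ v₃ • v₁ + det2 v₃ v₁ • v₂ + det2 v₁ v₂ • v₃ = 0 := by
  ext i
  fin_cases i <;> simp [det2] <;> ring

theorem vecMul_eq_of_det2_eq {v₁ v₂ v₃ w₁ w₂ w₃ : Fin 2 → R} (A : Matrix (Fin 2) (Fin 2) R)
    (hv : IsUnit (det2 v₁ v₂)) (h₁ : det2 v₂ v₃ = det2 w₂ w₃) (h₂ : det2 v₃ v₁ = det2 w₃ w₁)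
    (h₃ : det2 v₁ v₂ = det2 w₁ w₂) (hA₁ : v₁ ᵥ* A = w₁) (hA₂ : v₂ ᵥ* A = w₂) :
    v₃ ᵥ* A = w₃ := by
  have hv₃ := congrArg (· ᵥ* A) (det2_smul_add_det2_smul_add_det2_smul_eq_zero v₁ v₂ v₃)
  simp only [add_vecMul, smul_vecMul, hA₁, hA₂, zero_vecMul, h₁, h₂, h₃] at hv₃
  have hw₃ := det2_smul_add_det2_smul_add_det2_smul_eq_zero w₁ w₂ w₃
  refine hv.smul_left_cancel.mp ?_
  rw [h₃]
  linear_combination (exp := 1) hv₃ - hw₃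

end Det2

theorem SL2_simply_transitive_on_sigma_general (p r : ℕ)
    (d₁ d₂ d₃ : ZMod (p ^ r)) (hd₃ : IsUnit d₃)
    (v₁ v₂ v₃ w₁ w₂ w₃ : Fin 2 → ZMod (p ^ r))
    (hDv : det2 v₂ v₃ = d₁ ∧ det2 v₃ v₁ = d₂ ∧ det2 v₁ v₂ = d₃)
    (hDw : det2 w₂ w₃ = d₁ ∧ det2 w₃ w₁ = d₂ ∧ det2 w₁ w₂ = d₃) :
    ∃! γ : Matrix.SpecialLinearGroup (Fin 2) (ZMod (p ^ r)),
      Matrix.vecMul v₁ (γ : Matrix (Fin 2) (Fin 2) (ZMod (p ^ r))) = w₁ ∧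
      Matrix.vecMul v₂ (γ : Matrix (Fin 2) (Fin 2) (ZMod (p ^ r))) = w₂ ∧
      Matrix.vecMul v₃ (γ : Matrix (Fin 2) (Fin 2) (ZMod (p ^ r))) = w₃ := by
  obtain ⟨hv₁, hv₂, hv₃⟩ := hDv
  obtain ⟨hw₁, hw₂, hw₃⟩ := hDw
  obtain ⟨γ, hγ, hγ_unique⟩ :=
    SpecialLinearGroup.existsUnique_mul_eq (M := of ![v₁, v₂]) (N := of ![w₁, w₂])
      (by rwa [← det2_eq_det_of, hv₃]) (by rw [← det2_eq_det_of, ← det2_eq_det_of, hv₃, hw₃])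
  obtain ⟨hγ₁, hγ₂⟩ := (of_mul_eq_of_iff_vecMul_eq _ _ _ _ _).mp hγ
  have hγ₃ : v₃ ᵥ* γ = w₃ :=
    vecMul_eq_of_det2_eq _ (hv₃ ▸ hd₃) (hv₁.trans hw₁.symm) (hv₂.trans hw₂.symm)
      (hv₃.trans hw₃.symm) hγ₁ hγ₂
  refine ⟨γ, ⟨hγ₁, hγ₂, hγ₃⟩, fun δ hδ => hγ_unique δ ?_⟩
  exact (of_mul_eq_of_iff_vecMul_eq _ _ _ _ _).mpr ⟨hδ.1, hδ.2.1⟩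

/-- `SL₂(ℤ/p^rℤ)`, acting diagonally on the right, acts simply transitively on the set
of triples of primitive vectors with a fixed determinant invariant `(d₁,d₂,d₃)` made of
units: given two such triples, there is a unique `γ ∈ SL₂(ℤ/p^rℤ)` carrying one to the
other. -/
theorem SL2_simply_transitive_on_sigma (p r : ℕ) (hp : p.Prime) (hr : 1 ≤ r)
    (d₁ d₂ d₃ : ZMod (p ^ r)) (hd₁ : IsUnit d₁) (hd₂ : IsUnit d₂) (hd₃ : IsUnit d₃)
    (v₁ v₂ v₃ w₁ w₂ w₃ : Fin 2 → ZMod (p ^ r))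
    (hv₁ : IsPrimitiveVec p r v₁) (hv₂ : IsPrimitiveVec p r v₂)
    (hv₃ : IsPrimitiveVec p r v₃)
    (hw₁ : IsPrimitiveVec p r w₁) (hw₂ : IsPrimitiveVec p r w₂)
    (hw₃ : IsPrimitiveVec p r w₃)
    (hDv : det2 v₂ v₃ = d₁ ∧ det2 v₃ v₁ = d₂ ∧ det2 v₁ v₂ = d₃)
    (hDw : det2 w₂ w₃ = d₁ ∧ det2 w₃ w₁ = d₂ ∧ det2 w₁ w₂ = d₃) :
    ∃! γ : Matrix.SpecialLinearGroup (Fin 2) (ZMod (p ^ r)),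
      Matrix.vecMul v₁ (γ : Matrix (Fin 2) (Fin 2) (ZMod (p ^ r))) = w₁ ∧
      Matrix.vecMul v₂ (γ : Matrix (Fin 2) (Fin 2) (ZMod (p ^ r))) = w₂ ∧
      Matrix.vecMul v₃ (γ : Matrix (Fin 2) (Fin 2) (ZMod (p ^ r))) = w₃ :=
  SL2_simply_transitive_on_sigma_general p r d₁ d₂ d₃ hd₃ v₁ v₂ v₃ w₁ w₂ w₃ hDv hDw
end

section
/- Let R be a nontrivial commutative ring. For i = 1, 2, 3 let Vᵢ be a free R-module of rank 2 and let Aᵢ ⊆ Vᵢ be a submodule that is free of rank 1 and such that the quotient Vᵢ/Aᵢ is free of rank 1. Inside V := V₁ ⊗_R V₂ ⊗_R V₃, define: V^{++} as the image of A₁⊗A₂⊗A₃ under the map induced by the inclusions; V^{+} as the sum of the images of V₁⊗A₂⊗A₃, A₁⊗V₂⊗A₃ and A₁⊗A₂⊗V₃; and V^{−} as the sum of the images of V₁⊗V₂⊗A₃, V₁⊗A₂⊗V₃ and A₁⊗V₂⊗V₃. Then 0 ⊆ V^{++} ⊆ V^{+} ⊆ V^{−} ⊆ V is a filtration by submodules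 that are free of ranks 1, 4, 7 (with V free of rank 8), and the successive quotients V^{++}, V^{+}/V^{++}, V^{−}/V^{+}, V/V^{−} are free R-modules of ranks 1, 3, 3, 1 respectively. -/
/-!
Because `Vᵢ ⧸ Aᵢ` is free, `0 → Aᵢ → Vᵢ → Vᵢ ⧸ Aᵢ → 0` splits, so each `Vᵢ` has a basis
`eᵢ` indexed by `Unit ⊕ Unit` whose `inl` vector spans `Aᵢ`. The tensor basis `e₁ ⊗ e₂ ⊗ e₃`
is indexed by triples, and `V^{++}`, `V^{+}`, `V^{−}` are spanned by the basis vectors whose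
index has at most `0`, `1`, `2` entries `inr`. The span of a subfamily of a basis is free,
and the quotient of two nested such spans is free on the difference of the index sets, so all
ranks are cardinalities of explicit subsets of an 8-element set.
-/

open TensorProduct Submodule Module

noncomputable def Submodule.quotientComapSupEquivOfDisjoint {R M : Type*} [Ring R]
    [AddCommGroup M] [Module R M] {p q : Submodule R M} (h : Disjoint p q) :
    (↥(p ⊔ q) ⧸ comap (p ⊔ q).subtype q) ≃ₗ[R] p :=
  (LinearMap.quotientInfEquivSupQuotient p q).symm.trans
    (quotEquivOfEqBot _ (by rw [disjoint_iff_comap_eq_bot.mp h, inf_bot_eq]))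

theorem Submodule.exists_basis_sum_inl_eq {R V ι κ : Type*} [Ring R] [AddCommGroup V]
    [Module R V] (A : Submodule R V) (bA : Basis ι R A) (bQ : Basis κ R (V ⧸ A)) :
    ∃ b : Basis (ι ⊕ κ) R V, ∀ i, b (Sum.inl i) = bA i := by
  let S := ModuleCat.shortComplexOfCompEqZero A.subtype A.mkQ
    (LinearMap.exact_subtype_mkQ A).linearMap_comp_eq_zero
  have hS : S.ShortExact := ModuleCat.shortComplex_shortExact S (LinearMap.exact_subtype_mkQ A)
    A.injective_subtype A.mkQ_surjective
  exact ⟨ModuleCat.Basis.ofShortExact hS bA bQ, fun i => by simp [ModuleCat.Basis.ofShortExact, S]⟩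

theorem Submodule.exists_basis_eq_span_inl_of_rank_eq_one {R V : Type*} [CommRing R]
    [Nontrivial R] [AddCommGroup V] [Module R V] (A : Submodule R V) [Module.Free R A]
    (hA : Module.rank R A = 1) [Module.Free R (V ⧸ A)] (hQ : Module.rank R (V ⧸ A) = 1) :
    ∃ b : Basis (Unit ⊕ Unit) R V, A = span R (b '' {Sum.inl ()}) := by
  let bA := basisUnique Unit (finrank_eq_of_rank_eq (by rw [hA, Nat.cast_one]))
  obtain ⟨b, hb⟩ := A.exists_basis_sum_inl_eq bA
    (basisUnique Unit (finrank_eq_of_rank_eq (by rw [hQ, Nat.cast_one])))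
  refine ⟨b, ?_⟩
  rw [Set.image_singleton, hb, ← Set.image_singleton, ← Set.range_unique, ← A.coe_subtype,
    ← map_span, bA.span_eq, map_top, range_subtype]

namespace Module.Basis

section SpanImage

variable {R M ι : Type*} [CommRing R] [AddCommGroup M] [Module R M] (b : Basis ι R M)

noncomputable def spanImage (s : Set ι) : Basis s R (span R (b '' s)) :=
  (Basis.span (b.linearIndependent.comp _ Subtype.val_injective)).map
    (LinearEquiv.ofEq _ _ (by rw [Set.range_comp, Subtype.range_coe]))

theorem free_span_image (s : Set ι) : Module.Free R (span R (b '' s)) :=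
  .of_basis (b.spanImage s)

theorem rank_span_image [Nontrivial R] (s : Set ι) [Fintype s] :
    Module.rank R (span R (b '' s)) = Fintype.card s :=
  rank_eq_card_basis (b.spanImage s)

noncomputable def quotientSpanImageEquiv (s : Set ι) :
    (M ⧸ span R (b '' s)) ≃ₗ[R] span R (b '' sᶜ) :=
  quotientEquivOfIsCompl _ _ (b.linearIndependent.isCompl_span_image b.span_eq isCompl_compl)

theorem free_quotient_span_image (s : Set ι) : Module.Free R (M ⧸ span R (b '' s)) :=
  have := b.free_span_image sᶜ
  .of_equiv (b.quotientSpanImageEquiv s).symm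

theorem rank_quotient_span_image [Nontrivial R] (s : Set ι) [Fintype ↥sᶜ] :
    Module.rank R (M ⧸ span R (b '' s)) = Fintype.card ↥sᶜ := by
  rw [(b.quotientSpanImageEquiv s).rank_eq, rank_span_image]

theorem nonempty_quotient_comap_span_image_equiv {s t : Set ι} (hst : s ⊆ t) :
    Nonempty ((↥(span R (b '' t)) ⧸ (span R (b '' s)).comap (span R (b '' t)).subtype) ≃ₗ[R]
      span R (b '' (t \ s))) := by
  have key : Nonempty _ := ⟨quotientComapSupEquivOfDisjoint
    (b.linearIndependent.disjoint_span_image (Set.disjoint_sdiff_left : Disjoint (t \ s) s))⟩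
  rwa [← span_union, ← Set.image_union, Set.sdiff_union_of_subset hst] at key

theorem free_quotient_comap_span_image {s t : Set ι} (hst : s ⊆ t) :
    Module.Free R (↥(span R (b '' t)) ⧸ (span R (b '' s)).comap (span R (b '' t)).subtype) :=
  have := b.free_span_image (t \ s)
  .of_equiv (b.nonempty_quotient_comap_span_image_equiv hst).some.symm

theorem rank_quotient_comap_span_image [Nontrivial R] {s t : Set ι} (hst : s ⊆ t)
    [Fintype ↥(t \ s)] :
    Module.rank R (↥(span R (b '' t)) ⧸ (span R (b '' s)).comap (span R (b '' t)).subtype) =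
      Fintype.card ↥(t \ s) := by
  obtain ⟨e⟩ := b.nonempty_quotient_comap_span_image_equiv hst
  rw [e.rank_eq, rank_span_image]

end SpanImage

theorem map₂_mk_span_image {R M N ι κ : Type*} [CommRing R] [AddCommGroup M] [Module R M]
    [AddCommGroup N] [Module R N] (b₁ : Basis ι R M) (b₂ : Basis κ R N) (s : Set ι)
    (t : Set κ) :
    map₂ (TensorProduct.mk R M N) (span R (b₁ '' s)) (span R (b₂ '' t)) =
      span R (b₁.tensorProduct b₂ '' s ×ˢ t) := by
  rw [map₂_span_span, Set.image2_image_left, Set.image2_image_right, ← Set.image_prod]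
  simp [tensorProduct_apply']

end Module.Basis

theorem triple_tensor_four_step_filtration_general {R : Type*} [CommRing R] [Nontrivial R]
    {V₁ V₂ V₃ : Type*}
    [AddCommGroup V₁] [Module R V₁] [AddCommGroup V₂] [Module R V₂]
    [AddCommGroup V₃] [Module R V₃]
    (A₁ : Submodule R V₁) (A₂ : Submodule R V₂) (A₃ : Submodule R V₃)
    (hA₁f : Module.Free R A₁) (hA₁r : Module.rank R A₁ = 1)
    (hA₂f : Module.Free R A₂) (hA₂r : Module.rank R A₂ = 1)
    (hA₃f : Module.Free R A₃) (hA₃r : Module.rank R A₃ = 1)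
    (hQ₁f : Module.Free R (V₁ ⧸ A₁)) (hQ₁r : Module.rank R (V₁ ⧸ A₁) = 1)
    (hQ₂f : Module.Free R (V₂ ⧸ A₂)) (hQ₂r : Module.rank R (V₂ ⧸ A₂) = 1)
    (hQ₃f : Module.Free R (V₃ ⧸ A₃)) (hQ₃r : Module.rank R (V₃ ⧸ A₃) = 1) :
    let Vpp : Submodule R (V₁ ⊗[R] (V₂ ⊗[R] V₃)) :=
      LinearMap.range (TensorProduct.map A₁.subtype (TensorProduct.map A₂.subtype A₃.subtype))
    let Vp : Submodule R (V₁ ⊗[R] (V₂ ⊗[R] V₃)) :=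
      LinearMap.range (TensorProduct.map (LinearMap.id : V₁ →ₗ[R] V₁)
          (TensorProduct.map A₂.subtype A₃.subtype)) ⊔
        LinearMap.range (TensorProduct.map A₁.subtype
          (TensorProduct.map (LinearMap.id : V₂ →ₗ[R] V₂) A₃.subtype)) ⊔
        LinearMap.range (TensorProduct.map A₁.subtype
          (TensorProduct.map A₂.subtype (LinearMap.id : V₃ →ₗ[R] V₃)))
    let Vm : Submodule R (V₁ ⊗[R] (V₂ ⊗[R] V₃)) :=
      LinearMap.range (TensorProduct.map (LinearMap.id : V₁ →ₗ[R] V₁)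
          (TensorProduct.map (LinearMap.id : V₂ →ₗ[R] V₂) A₃.subtype)) ⊔
        LinearMap.range (TensorProduct.map (LinearMap.id : V₁ →ₗ[R] V₁)
          (TensorProduct.map A₂.subtype (LinearMap.id : V₃ →ₗ[R] V₃))) ⊔
        LinearMap.range (TensorProduct.map A₁.subtype
          (TensorProduct.map (LinearMap.id : V₂ →ₗ[R] V₂) (LinearMap.id : V₃ →ₗ[R] V₃)))
    Vpp ≤ Vp ∧ Vp ≤ Vm ∧
      Module.Free R Vpp ∧ Module.rank R Vpp = 1 ∧
      Module.Free R Vp ∧ Module.rank R Vp = 4 ∧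
      Module.Free R Vm ∧ Module.rank R Vm = 7 ∧
      Module.Free R (V₁ ⊗[R] (V₂ ⊗[R] V₃)) ∧
      Module.rank R (V₁ ⊗[R] (V₂ ⊗[R] V₃)) = 8 ∧
      Module.Free R
        (@HasQuotient.Quotient ↥Vp (Submodule R ↥Vp) Submodule.hasQuotient
          (Vpp.comap Vp.subtype)) ∧
      Module.rank R
        (@HasQuotient.Quotient ↥Vp (Submodule R ↥Vp) Submodule.hasQuotient
          (Vpp.comap Vp.subtype)) = 3 ∧
      Module.Free R
        (@HasQuotient.Quotient ↥Vm (Submodule R ↥Vm) Submodule.hasQuotient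
          (Vp.comap Vm.subtype)) ∧
      Module.rank R
        (@HasQuotient.Quotient ↥Vm (Submodule R ↥Vm) Submodule.hasQuotient
          (Vp.comap Vm.subtype)) = 3 ∧
      Module.Free R ((V₁ ⊗[R] (V₂ ⊗[R] V₃)) ⧸ Vm) ∧
      Module.rank R ((V₁ ⊗[R] (V₂ ⊗[R] V₃)) ⧸ Vm) = 1 := by
  obtain ⟨e₁, rfl⟩ := A₁.exists_basis_eq_span_inl_of_rank_eq_one hA₁r hQ₁r
  obtain ⟨e₂, rfl⟩ := A₂.exists_basis_eq_span_inl_of_rank_eq_one hA₂r hQ₂r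
  obtain ⟨e₃, rfl⟩ := A₃.exists_basis_eq_span_inl_of_rank_eq_one hA₃r hQ₃r
  intro Vpp Vp Vm
  let E := e₁.tensorProduct (e₂.tensorProduct e₃)
  let a : Set (Unit ⊕ Unit) := {Sum.inl ()}
  let Spp := a ×ˢ a ×ˢ a
  let Sp := .univ ×ˢ a ×ˢ a ∪ a ×ˢ .univ ×ˢ a ∪ a ×ˢ a ×ˢ .univ
  let Sm := .univ ×ˢ .univ ×ˢ a ∪ .univ ×ˢ a ×ˢ .univ ∪ a ×ˢ .univ ×ˢ .univ
  have hV : Vpp = span R (E '' Spp) ∧ Vp = span R (E '' Sp) ∧ Vm = span R (E '' Sm) := by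
    refine ⟨?_, ?_, ?_⟩ <;>
    simp only [Vpp, Vp, Vm, range_map, range_subtype, LinearMap.range_id, ← e₁.span_eq,
      ← e₂.span_eq, ← e₃.span_eq, ← Set.image_univ, Basis.map₂_mk_span_image, ← span_union,
      ← Set.image_union] <;>
    rfl
  obtain ⟨hVpp, hVp, hVm⟩ := hV
  clear_value Vpp Vp Vm
  subst hVpp hVp hVm
  have hSpp : Spp ⊆ Sp := by rw [Set.subset_def]; decide
  have hSp : Sp ⊆ Sm := by rw [Set.subset_def]; decide
  refine ⟨span_mono (Set.image_mono hSpp), span_mono (Set.image_mono hSp), E.free_span_image _,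
    ?_, E.free_span_image _, ?_, E.free_span_image _, ?_, .of_basis E, ?_,
    E.free_quotient_comap_span_image hSpp, ?_, E.free_quotient_comap_span_image hSp, ?_,
    E.free_quotient_span_image _, ?_⟩
  all_goals
    simp only [E.rank_span_image, E.rank_quotient_comap_span_image hSpp,
      E.rank_quotient_comap_span_image hSp, E.rank_quotient_span_image, rank_eq_card_basis E]
    norm_cast

/-- The four-step filtration of a triple tensor product of rank-2 free modules, each
equipped with a rank-1 free submodule with rank-1 free quotient: the submodules
`V^{++} ⊆ V^{+} ⊆ V^{−} ⊆ V` are free of ranks `1, 4, 7` (with `V` free of rank `8`)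
and the successive quotients `V^{++}`, `V^{+}/V^{++}`, `V^{−}/V^{+}`, `V/V^{−}` are
free of ranks `1, 3, 3, 1`. -/
theorem triple_tensor_four_step_filtration {R : Type*} [CommRing R] [Nontrivial R]
    {V₁ V₂ V₃ : Type*}
    [AddCommGroup V₁] [Module R V₁] [AddCommGroup V₂] [Module R V₂]
    [AddCommGroup V₃] [Module R V₃]
    (hV₁f : Module.Free R V₁) (hV₁r : Module.rank R V₁ = 2)
    (hV₂f : Module.Free R V₂) (hV₂r : Module.rank R V₂ = 2)
    (hV₃f : Module.Free R V₃) (hV₃r : Module.rank R V₃ = 2)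
    (A₁ : Submodule R V₁) (A₂ : Submodule R V₂) (A₃ : Submodule R V₃)
    (hA₁f : Module.Free R A₁) (hA₁r : Module.rank R A₁ = 1)
    (hA₂f : Module.Free R A₂) (hA₂r : Module.rank R A₂ = 1)
    (hA₃f : Module.Free R A₃) (hA₃r : Module.rank R A₃ = 1)
    (hQ₁f : Module.Free R (V₁ ⧸ A₁)) (hQ₁r : Module.rank R (V₁ ⧸ A₁) = 1)
    (hQ₂f : Module.Free R (V₂ ⧸ A₂)) (hQ₂r : Module.rank R (V₂ ⧸ A₂) = 1)
    (hQ₃f : Module.Free R (V₃ ⧸ A₃)) (hQ₃r : Module.rank R (V₃ ⧸ A₃) = 1) :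
    let Vpp : Submodule R (V₁ ⊗[R] (V₂ ⊗[R] V₃)) :=
      LinearMap.range (TensorProduct.map A₁.subtype (TensorProduct.map A₂.subtype A₃.subtype))
    let Vp : Submodule R (V₁ ⊗[R] (V₂ ⊗[R] V₃)) :=
      LinearMap.range (TensorProduct.map (LinearMap.id : V₁ →ₗ[R] V₁)
          (TensorProduct.map A₂.subtype A₃.subtype)) ⊔
        LinearMap.range (TensorProduct.map A₁.subtype
          (TensorProduct.map (LinearMap.id : V₂ →ₗ[R] V₂) A₃.subtype)) ⊔
        LinearMap.range (TensorProduct.map A₁.subtype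
          (TensorProduct.map A₂.subtype (LinearMap.id : V₃ →ₗ[R] V₃)))
    let Vm : Submodule R (V₁ ⊗[R] (V₂ ⊗[R] V₃)) :=
      LinearMap.range (TensorProduct.map (LinearMap.id : V₁ →ₗ[R] V₁)
          (TensorProduct.map (LinearMap.id : V₂ →ₗ[R] V₂) A₃.subtype)) ⊔
        LinearMap.range (TensorProduct.map (LinearMap.id : V₁ →ₗ[R] V₁)
          (TensorProduct.map A₂.subtype (LinearMap.id : V₃ →ₗ[R] V₃))) ⊔
        LinearMap.range (TensorProduct.map A₁.subtype
          (TensorProduct.map (LinearMap.id : V₂ →ₗ[R] V₂) (LinearMap.id : V₃ →ₗ[R] V₃)))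
    Vpp ≤ Vp ∧ Vp ≤ Vm ∧
      Module.Free R Vpp ∧ Module.rank R Vpp = 1 ∧
      Module.Free R Vp ∧ Module.rank R Vp = 4 ∧
      Module.Free R Vm ∧ Module.rank R Vm = 7 ∧
      Module.Free R (V₁ ⊗[R] (V₂ ⊗[R] V₃)) ∧
      Module.rank R (V₁ ⊗[R] (V₂ ⊗[R] V₃)) = 8 ∧
      Module.Free R
        (@HasQuotient.Quotient ↥Vp (Submodule R ↥Vp) Submodule.hasQuotient
          (Vpp.comap Vp.subtype)) ∧
      Module.rank R
        (@HasQuotient.Quotient ↥Vp (Submodule R ↥Vp) Submodule.hasQuotient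
          (Vpp.comap Vp.subtype)) = 3 ∧
      Module.Free R
        (@HasQuotient.Quotient ↥Vm (Submodule R ↥Vm) Submodule.hasQuotient
          (Vp.comap Vm.subtype)) ∧
      Module.rank R
        (@HasQuotient.Quotient ↥Vm (Submodule R ↥Vm) Submodule.hasQuotient
          (Vp.comap Vm.subtype)) = 3 ∧
      Module.Free R ((V₁ ⊗[R] (V₂ ⊗[R] V₃)) ⧸ Vm) ∧
      Module.rank R ((V₁ ⊗[R] (V₂ ⊗[R] V₃)) ⧸ Vm) = 1 :=
  triple_tensor_four_step_filtration_general A₁ A₂ A₃ hA₁f hA₁r hA₂f hA₂r hA₃f hA₃r hQ₁f hQ₁r hQ₂f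
    hQ₂r hQ₃f hQ₃r
end
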